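/- In the odd frame of the Thue–Morse word, the pairs 00 and 11 alternate: consider the blocks B_k = t(2k+1) t(2k+2) for k ∈ ℕ, and call B_k a pair if t(2k+1) = t(2k+2). If k < l, B_k and B_l are pairs, and B_m is not a pair for every m with k < m < l, then t(2k+1) ≠ t(2l+1). -/

import Mathlib

/-- The Thue–Morse sequence: sum of binary digits of `n`, mod 2. -/
def tm (n : ℕ) : Fin 2 := Fin.ofNat 2 (Nat.digits 2 n).sum

/-- The factor of the Thue–Morse word of length `n` starting at position `i`. -/
def tmWord (i n : ℕ) : List (Fin 2) := (List.range n).map (fun j => tm (i + j))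

/-- A binary word is a factor of the Thue–Morse word. -/
def IsFactor (w : List (Fin 2)) : Prop := ∃ i : ℕ, w = tmWord i w.length

/-- Number of occurrences of the word `x` as a factor of `u`. -/
def occCount (u x : List (Fin 2)) : ℕ :=
  ((List.range u.length).filter (fun i => (u.drop i).take x.length = x)).length

/-- Two binary words (of equal length) are 2-abelian equivalent: same first letter,
same last letter, and the same number of occurrences of every word of length 2. -/
def TwoAbelianEquiv (u v : List (Fin 2)) : Prop :=
  u.length = v.length ∧ u.take 1 = v.take 1 ∧
  u.drop (u.length - 1) = v.drop (v.length - 1) ∧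
  ∀ x : List (Fin 2), x.length = 2 → occCount u x = occCount v x

/-- `P n` is the 2-abelian complexity of the Thue–Morse word: the number of
2-abelian equivalence classes of factors of length `n`. -/
noncomputable def P (n : ℕ) : ℕ :=
  Nat.card (Quot (fun u v : {w : List (Fin 2) // w.length = n ∧ IsFactor w} =>
    TwoAbelianEquiv u.1 v.1))

/-- `pword w` counts the pairs in `w`: the total number of occurrences of `00` and `11`. -/
def pword (w : List (Fin 2)) : ℕ := occCount w [0, 0] + occCount w [1, 1]

/-- The set of possible pair counts of Thue–Morse factors of length `n`. -/
def pairs (n : ℕ) : Set ℕ :=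
  { m | ∃ w : List (Fin 2), w.length = n ∧ IsFactor w ∧ pword w = m }

/-- The set of possible pair counts of Thue–Morse factors of length `n`
occurring at some odd position (pure odd factors). -/
def PAIRS (n : ℕ) : Set ℕ := { m | ∃ i : ℕ, i % 2 = 1 ∧ pword (tmWord i n) = m }

/-!
Since `t(2n) = t(n)` and `t(2n+1) = t(n) + 1`, the block `t(2m+1) t(2m+2) = (t(m) + 1) t(m+1)`
is a pair exactly when `t` changes value between `m` and `m + 1`. So if no block strictly between
`B_k` and `B_l` is a pair, `t` is constant on `[k+1, l]`, and the pair `B_k` starts with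
`t(k+1) = t(l)`, while `B_l` starts with `t(l) + 1`.
-/

lemma fin_two_add_one_eq_iff_ne {a b : Fin 2} : a + 1 = b ↔ a ≠ b := by
  revert a b
  decide

lemma Nat.apply_eq_of_forall_succ_eq {α : Type*} (f : ℕ → α) {a b : ℕ} (hab : a ≤ b)
    (h : ∀ m, a ≤ m → m < b → f (m + 1) = f m) : f b = f a := by
  induction b, hab using Nat.le_induction with
  | base => rfl
  | succ n han ih =>
    rw [h n han n.lt_succ_self, ih fun m ham hmn => h m ham (hmn.trans n.lt_succ_self)]

lemma tm_two_mul (n : ℕ) : tm (2 * n) = tm n := by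
  rcases n.eq_zero_or_pos with rfl | hn
  · rfl
  · rw [tm, Nat.digits_def' one_lt_two (by omega), Nat.mul_mod_right, Nat.mul_div_right n two_pos]
    simp [tm]

lemma tm_two_mul_add_one (n : ℕ) : tm (2 * n + 1) = tm n + 1 := by
  rw [tm, Nat.digits_def' one_lt_two (by omega), Nat.mul_add_mod_self_left,
    Nat.mul_add_div two_pos, List.sum_cons, add_comm]
  ext
  simp [tm, Fin.val_add]

lemma tm_two_mul_add_two (n : ℕ) : tm (2 * n + 2) = tm (n + 1) := by
  rw [← tm_two_mul (n + 1), mul_add_one]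

lemma tm_odd_block_eq_iff (m : ℕ) : tm (2 * m + 1) = tm (2 * m + 2) ↔ tm m ≠ tm (m + 1) := by
  rw [tm_two_mul_add_one, tm_two_mul_add_two, fin_two_add_one_eq_iff_ne]

theorem thueMorse_pairs_alternate_in_odd_frame_general (k l : ℕ) (hkl : k < l)
    (hk : tm (2 * k + 1) = tm (2 * k + 2))
    (hmid : ∀ m, k < m → m < l → tm (2 * m + 1) ≠ tm (2 * m + 2)) :
    tm (2 * k + 1) ≠ tm (2 * l + 1) := by
  have hk_start : tm (2 * k + 1) = tm (k + 1) := hk.trans (tm_two_mul_add_two k)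
  have hconst : tm l = tm (k + 1) := Nat.apply_eq_of_forall_succ_eq tm hkl fun m hkm hml =>
    (not_not.mp ((tm_odd_block_eq_iff m).not.mp (hmid m hkm hml))).symm
  rw [hk_start, tm_two_mul_add_one, hconst]
  exact fin_two_add_one_eq_iff_ne.mp rfl

theorem thueMorse_pairs_alternate_in_odd_frame (k l : ℕ) (hkl : k < l)
    (hk : tm (2 * k + 1) = tm (2 * k + 2)) (hl : tm (2 * l + 1) = tm (2 * l + 2))
    (hmid : ∀ m, k < m → m < l → tm (2 * m + 1) ≠ tm (2 * m + 2)) :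
    tm (2 * k + 1) ≠ tm (2 * l + 1) :=
  thueMorse_pairs_alternate_in_odd_frame_general k l hkl hk hmid
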